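/- Let (X,d) be a metric space, let S ⊆ X be a finite server set, and let c_1,…,c_m ∈ X be clients with m ≤ |S|. Let 1 ≤ t < m and let f : {1,…,t} → S be an optimal matching of the first t clients into S. Then there exists an optimal matching g : {1,…,m} → S of all m clients into S such that range(f) ⊆ range(g); consequently |range(g) \ range(f)| = m − t. -/

import Mathlib

/-!
Start from any optimal matching `g₀` of all `m` clients and follow alternating paths: from a
client `j₀ ≤ t` whose server `f j₀` is unused by `g₀`, move to the client `j₁ ≤ t` with
`f j₁ = g₀ j₀`, and so on. On the set `J` of clients reached this way, swap `f` and `g₀`.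
The result `g` is a matching of all `m` clients using every server of `f`, and the reverse swap
`f'` is a matching of the first `t` clients. Since `cost g + cost f' = cost g₀ + cost f` and
`cost f ≤ cost f'`, `g` is optimal as well.
-/

/-- A matching of the first `t` clients (indexed `1,…,t`) into the server set `S`:
an injective assignment whose values on `{1,…,t}` are servers in `S`. -/
def IsMatching {X : Type*} [MetricSpace X] (S : Finset X) (t : ℕ) (f : ℕ → X) : Prop :=
  Set.InjOn f (Set.Icc 1 t) ∧ ∀ j ∈ Set.Icc 1 t, f j ∈ S

/-- The cost of a matching `f` of the first `t` clients `c 1, …, c t`. -/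
noncomputable def matchingCost {X : Type*} [MetricSpace X] (t : ℕ) (c f : ℕ → X) : ℝ :=
  ∑ j ∈ Finset.Icc 1 t, dist (c j) (f j)

/-- `OPT S t c` is the minimum cost of a matching of the first `t` clients into `S`. -/
noncomputable def OPT {X : Type*} [MetricSpace X] (S : Finset X) (t : ℕ) (c : ℕ → X) : ℝ :=
  sInf {r : ℝ | ∃ f : ℕ → X, IsMatching S t f ∧ matchingCost t c f = r}

section Matching

variable {X : Type*} [MetricSpace X] {S : Finset X} {t m : ℕ}

theorem IsMatching.ncard_image {f : ℕ → X} (hf : IsMatching S t f) :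
    (f '' Set.Icc 1 t).ncard = t := by
  rw [hf.1.ncard_image, Set.ncard_Icc_nat]
  omega

theorem exists_isMatching (hm : m ≤ S.card) (x : X) : ∃ f : ℕ → X, IsMatching S m f := by
  let e : Fin m ↪ S := (Fin.castLEEmb hm).trans S.equivFin.symm.toEmbedding
  refine ⟨fun j => if h : j - 1 < m then e ⟨j - 1, h⟩ else x, ?_, ?_⟩
  · intro a ha b hb hab
    have ha' : a - 1 < m := by grind
    have hb' : b - 1 < m := by grind
    simp only [dif_pos ha', dif_pos hb', Subtype.val_inj, e.injective.eq_iff, Fin.mk.injEq] at hab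
    grind
  · intro j hj
    have hj' : j - 1 < m := by grind
    simp only [dif_pos hj', Finset.coe_mem]

variable (S) (c : ℕ → X)

theorem finite_matchingCosts (t : ℕ) :
    {r : ℝ | ∃ f : ℕ → X, IsMatching S t f ∧ matchingCost t c f = r}.Finite := by
  refine (Set.finite_range fun σ : Finset.Icc 1 t → S =>
    ∑ j ∈ (Finset.Icc 1 t).attach, dist (c j) (σ j : X)).subset ?_
  rintro r ⟨f, hf, rfl⟩
  refine ⟨fun j => ⟨f j, hf.2 j (Finset.coe_Icc 1 t ▸ j.2)⟩, ?_⟩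
  exact Finset.sum_attach (Finset.Icc 1 t) fun j => dist (c j) (f j)

theorem OPT_le_matchingCost {f : ℕ → X} (hf : IsMatching S t f) :
    OPT S t c ≤ matchingCost t c f :=
  csInf_le (finite_matchingCosts S c t).bddBelow ⟨f, hf, rfl⟩

theorem exists_matchingCost_eq_OPT (hm : m ≤ S.card) (x : X) :
    ∃ g : ℕ → X, IsMatching S m g ∧ matchingCost m c g = OPT S m c := by
  obtain ⟨f, hf⟩ := exists_isMatching hm x
  exact Set.Nonempty.csInf_mem (by exact ⟨_, f, hf, rfl⟩) (finite_matchingCosts S c m)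

variable {S}

theorem matchingCost_eq_add_sum_Ioc (f : ℕ → X) (htm : t ≤ m) :
    matchingCost m c f = matchingCost t c f + ∑ j ∈ Finset.Ioc t m, dist (c j) (f j) := by
  have hIcc (n : ℕ) : Finset.Icc 1 n = Finset.Ioc 0 n := Finset.Icc_add_one_left_eq_Ioc 0 n
  simp only [matchingCost, hIcc, Finset.sum_Ioc_consecutive _ (Nat.zero_le t) htm]

theorem matchingCost_piecewise_add_piecewise (f g : ℕ → X) (htm : t ≤ m) {J : Set ℕ}
    [DecidablePred (· ∈ J)] (hJ : J ⊆ Set.Icc 1 t) :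
    matchingCost m c (J.piecewise f g) + matchingCost t c (J.piecewise g f) =
      matchingCost m c g + matchingCost t c f := by
  have htail : ∀ j ∈ Finset.Ioc t m, J.piecewise f g j = g j := fun j hj =>
    Set.piecewise_eq_of_notMem _ _ _ fun hjJ => (hJ hjJ).2.not_gt (Finset.mem_Ioc.1 hj).1
  have hhead : ∀ j ∈ Finset.Icc 1 t, dist (c j) (J.piecewise f g j) +
      dist (c j) (J.piecewise g f j) = dist (c j) (g j) + dist (c j) (f j) := by
    intro j _
    by_cases hj : j ∈ J <;> simp [hj, add_comm]
  rw [matchingCost_eq_add_sum_Ioc c _ htm, matchingCost_eq_add_sum_Ioc c g htm,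
    Finset.sum_congr rfl fun j hj => congrArg (dist (c j)) (htail j hj)]
  have := Finset.sum_congr rfl hhead
  simp only [Finset.sum_add_distrib] at this
  simp only [matchingCost]
  linarith

end Matching

section Alternating

variable {X : Type*} {t m : ℕ} {f g : ℕ → X}

def alternatingIndices (t m : ℕ) (f g : ℕ → X) : Set ℕ :=
  {j | ∃ j₀ ∈ Set.Icc 1 t, f j₀ ∉ g '' Set.Icc 1 m ∧
    Relation.ReflTransGen (fun i j => j ∈ Set.Icc 1 t ∧ g i = f j) j₀ j}

theorem alternatingIndices_subset : alternatingIndices t m f g ⊆ Set.Icc 1 t := by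
  rintro j ⟨j₀, hj₀, -, hpath⟩
  rcases hpath.cases_tail with rfl | ⟨i, -, hj, -⟩
  exacts [hj₀, hj]

theorem mem_alternatingIndices_of_notMem_image {j : ℕ} (hj : j ∈ Set.Icc 1 t)
    (hfree : f j ∉ g '' Set.Icc 1 m) : j ∈ alternatingIndices t m f g :=
  ⟨j, hj, hfree, .refl⟩

theorem mem_alternatingIndices_of_eq {i j : ℕ} (hi : i ∈ alternatingIndices t m f g)
    (hj : j ∈ Set.Icc 1 t) (hij : g i = f j) : j ∈ alternatingIndices t m f g := by
  obtain ⟨j₀, hj₀, hfree, hpath⟩ := hi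
  exact ⟨j₀, hj₀, hfree, hpath.tail ⟨hj, hij⟩⟩

theorem exists_predecessor_of_mem_alternatingIndices {j : ℕ}
    (hj : j ∈ alternatingIndices t m f g) :
    f j ∉ g '' Set.Icc 1 m ∨ ∃ i ∈ alternatingIndices t m f g, g i = f j := by
  obtain ⟨j₀, hj₀, hfree, hpath⟩ := hj
  rcases hpath.cases_tail with rfl | ⟨i, hpath', -, hij⟩
  exacts [.inl hfree, .inr ⟨i, ⟨j₀, hj₀, hfree, hpath'⟩, hij⟩]

open Classical in
theorem image_subset_image_piecewise_alternatingIndices (htm : t ≤ m) :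
    f '' Set.Icc 1 t ⊆ (alternatingIndices t m f g).piecewise f g '' Set.Icc 1 m := by
  set J := alternatingIndices t m f g
  rintro _ ⟨j, hj, rfl⟩
  by_cases hjJ : j ∈ J
  · exact ⟨j, Set.Icc_subset_Icc le_rfl htm hj, by simp [hjJ]⟩
  · obtain ⟨i, hi, hij⟩ : f j ∈ g '' Set.Icc 1 m := by
      by_contra hfree
      exact hjJ (mem_alternatingIndices_of_notMem_image hj hfree)
    have hiJ : i ∉ J := fun hiJ => hjJ (mem_alternatingIndices_of_eq hiJ hj hij)
    exact ⟨i, hi, by simp [hiJ, hij]⟩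

variable [MetricSpace X] {S : Finset X}

open Classical in
theorem IsMatching.piecewise_alternatingIndices (hf : IsMatching S t f) (hg : IsMatching S m g)
    (htm : t ≤ m) : IsMatching S m ((alternatingIndices t m f g).piecewise f g) := by
  set J := alternatingIndices t m f g
  have hJ : J ⊆ Set.Icc 1 m := alternatingIndices_subset.trans (Set.Icc_subset_Icc le_rfl htm)
  have hcross : ∀ a ∈ J, ∀ b ∈ Set.Icc 1 m, b ∉ J → f a ≠ g b := by
    intro a ha b hb hbJ hab
    rcases exists_predecessor_of_mem_alternatingIndices ha with hfree | ⟨i, hi, hia⟩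
    · exact hfree ⟨b, hb, hab.symm⟩
    · exact hbJ (hg.1 (hJ hi) hb (hia.trans hab) ▸ hi)
  refine ⟨fun a ha b hb hab => ?_, fun j hj => ?_⟩
  · by_cases haJ : a ∈ J <;> by_cases hbJ : b ∈ J <;>
      simp only [Set.piecewise_eq_of_mem, Set.piecewise_eq_of_notMem, haJ, hbJ,
        not_false_eq_true] at hab
    · exact hf.1 (alternatingIndices_subset haJ) (alternatingIndices_subset hbJ) hab
    · exact absurd hab (hcross a haJ b hb hbJ)
    · exact absurd hab.symm (hcross b hbJ a ha haJ)
    · exact hg.1 ha hb hab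
  · by_cases hjJ : j ∈ J
    · simpa [hjJ] using hf.2 j (alternatingIndices_subset hjJ)
    · simpa [hjJ] using hg.2 j hj

open Classical in
theorem IsMatching.piecewise_alternatingIndices_swap (hf : IsMatching S t f)
    (hg : IsMatching S m g) (htm : t ≤ m) :
    IsMatching S t ((alternatingIndices t m f g).piecewise g f) := by
  set J := alternatingIndices t m f g
  have hsub : Set.Icc 1 t ⊆ Set.Icc 1 m := Set.Icc_subset_Icc le_rfl htm
  refine ⟨fun a ha b hb hab => ?_, fun j hj => ?_⟩
  · by_cases haJ : a ∈ J <;> by_cases hbJ : b ∈ J <;>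
      simp only [Set.piecewise_eq_of_mem, Set.piecewise_eq_of_notMem, haJ, hbJ,
        not_false_eq_true] at hab
    · exact hg.1 (hsub ha) (hsub hb) hab
    · exact absurd (mem_alternatingIndices_of_eq haJ hb hab) hbJ
    · exact absurd (mem_alternatingIndices_of_eq hbJ ha hab.symm) haJ
    · exact hf.1 ha hb hab
  · by_cases hjJ : j ∈ J
    · simpa [hjJ] using hg.2 j (hsub hj)
    · simpa [hjJ] using hf.2 j hj

end Alternating

theorem stmt5_general {X : Type*} [MetricSpace X] (S : Finset X) (c : ℕ → X) (m t : ℕ)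
    (hm : m ≤ S.card) (htm : t < m)
    (f : ℕ → X) (hf : IsMatching S t f) (hfopt : matchingCost t c f = OPT S t c) :
    ∃ g : ℕ → X, IsMatching S m g ∧ matchingCost m c g = OPT S m c ∧
      f '' Set.Icc 1 t ⊆ g '' Set.Icc 1 m ∧
      (g '' Set.Icc 1 m \ f '' Set.Icc 1 t).ncard = m - t := by
  classical
  obtain ⟨g₀, hg₀, hg₀opt⟩ := exists_matchingCost_eq_OPT S c hm (c 0)
  have hg := hf.piecewise_alternatingIndices hg₀ htm.le
  have hcost := matchingCost_piecewise_add_piecewise c f g₀ htm.le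
    (alternatingIndices_subset (f := f) (g := g₀) (m := m))
  have hf'opt := OPT_le_matchingCost S c (hf.piecewise_alternatingIndices_swap hg₀ htm.le)
  have himage := image_subset_image_piecewise_alternatingIndices (f := f) (g := g₀) htm.le
  refine ⟨_, hg, le_antisymm ?_ (OPT_le_matchingCost S c hg), himage, ?_⟩
  · linarith
  · rw [Set.ncard_sdiff himage ((Set.finite_Icc 1 t).image f), hg.ncard_image, hf.ncard_image]

/-- Let `f` be an optimal matching of the first `t` clients into `S`, and let `t < m ≤ |S|`.
Then there is an optimal matching `g` of the first `m` clients into `S` whose image extends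
the image of `f`; consequently `|range g \ range f| = m − t`. -/
theorem stmt5 {X : Type*} [MetricSpace X] (S : Finset X) (c : ℕ → X) (m t : ℕ)
    (hm : m ≤ S.card) (ht1 : 1 ≤ t) (htm : t < m)
    (f : ℕ → X) (hf : IsMatching S t f) (hfopt : matchingCost t c f = OPT S t c) :
    ∃ g : ℕ → X, IsMatching S m g ∧ matchingCost m c g = OPT S m c ∧
      f '' Set.Icc 1 t ⊆ g '' Set.Icc 1 m ∧
      (g '' Set.Icc 1 m \ f '' Set.Icc 1 t).ncard = m - t :=
  stmt5_general S c m t hm htm f hf hfopt
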